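/- arXiv:2605.21119 — 5 statements merged into one kernel-verified Lean document; each statement's English description precedes it below -/
import Mathlib

section
/- (Lemma 1, input–output form) Let p ≥ 1, let H be the real Hilbert space L² of square-integrable functions from [0,∞) to ℝᵖ (Mathlib: MeasureTheory.Lp (EuclideanSpace ℝ (Fin p)) 2 with respect to Lebesgue measure restricted to [0,∞)), and let R ⊆ H × H be a relation such that (0, y) ∈ R implies y = 0. Let Π = [[π₁₁, π₁₂],[π₁₂, π₂₂]] be a real symmetric 2×2 matrix. Then the quadratic constraint π₁₁·‖y‖² + 2·π₁₂·⟪u, y⟫ + π₂₂·‖u‖² ≥ 0 holds for all (u, y) ∈ R if and only if SG(R) ⊆ S(Π). -/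
open RealInnerProductSpace MeasureTheory

/-- The region S(Pm) = {z ∈ ℂ : π₁₁·|z|² + 2·π₁₂·(Re z) + π₂₂ ≥ 0}. -/
noncomputable def SRegion (Pm : Matrix (Fin 2) (Fin 2) ℝ) : Set ℂ :=
  {z : ℂ | 0 ≤ Pm 0 0 * ‖z‖ ^ 2 + 2 * Pm 0 1 * z.re + Pm 1 1}

open Classical in
/-- θ(u,y) = arccos(⟪u,y⟫/(‖u‖·‖y‖)) if y ≠ 0, and 0 if y = 0. -/
noncomputable def theta {H : Type*} [NormedAddCommGroup H] [InnerProductSpace ℝ H]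
    (u y : H) : ℝ :=
  if y = 0 then 0 else Real.arccos (⟪u, y⟫ / (‖u‖ * ‖y‖))

/-- The sample point z₊(u,y) = (‖y‖/‖u‖)·exp(i·θ(u,y)) ∈ ℂ. -/
noncomputable def zplus {H : Type*} [NormedAddCommGroup H] [InnerProductSpace ℝ H]
    (u y : H) : ℂ :=
  ((‖y‖ / ‖u‖ : ℝ) : ℂ) * Complex.exp (Complex.I * (theta u y : ℝ))

/-- The sample point z₋(u,y) = (‖y‖/‖u‖)·exp(−i·θ(u,y)) ∈ ℂ. -/
noncomputable def zminus {H : Type*} [NormedAddCommGroup H] [InnerProductSpace ℝ H]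
    (u y : H) : ℂ :=
  ((‖y‖ / ‖u‖ : ℝ) : ℂ) * Complex.exp (-(Complex.I * (theta u y : ℝ)))

/-- The scaled graph of a relation R ⊆ H × H:
SG(R) = {z₊(u,y) : (u,y) ∈ R, u ≠ 0} ∪ {z₋(u,y) : (u,y) ∈ R, u ≠ 0}. -/
noncomputable def SG {H : Type*} [NormedAddCommGroup H] [InnerProductSpace ℝ H]
    (R : Set (H × H)) : Set ℂ :=
  {z | ∃ q ∈ R, q.1 ≠ 0 ∧ (z = zplus q.1 q.2 ∨ z = zminus q.1 q.2)}

lemma zdata {H : Type*} [NormedAddCommGroup H] [InnerProductSpace ℝ H]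
    (u y : H) (hu : u ≠ 0) (z : ℂ) (hz : z = zplus u y ∨ z = zminus u y) :
    ‖z‖ = ‖y‖ / ‖u‖ ∧ z.re = ⟪u, y⟫ / ‖u‖ ^ 2 := by
  have huN : ‖u‖ ≠ 0 := norm_ne_zero_iff.mpr hu
  have huP : (0:ℝ) < ‖u‖ := norm_pos_iff.mpr hu
  have hρ : (0:ℝ) ≤ ‖y‖ / ‖u‖ := by positivity
  have hcos : (‖y‖ / ‖u‖) * Real.cos (theta u y) = ⟪u, y⟫ / ‖u‖ ^ 2 := by
    by_cases hy : y = 0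
    · simp [theta, hy]
    · have hyN : ‖y‖ ≠ 0 := norm_ne_zero_iff.mpr hy
      have hyP : (0:ℝ) < ‖y‖ := norm_pos_iff.mpr hy
      have h1 : |⟪u, y⟫| ≤ ‖u‖ * ‖y‖ := abs_real_inner_le_norm u y
      rw [abs_le] at h1
      have hprod : (0:ℝ) < ‖u‖ * ‖y‖ := by positivity
      have hc := Real.cos_arccos (x := ⟪u, y⟫ / (‖u‖ * ‖y‖))
        (by rw [le_div_iff₀ hprod]; linarith)
        (by rw [div_le_one hprod]; linarith)
      simp only [theta, hy, if_false, hc]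
      field_simp
  have hneg : -(Complex.I * ((theta u y : ℝ) : ℂ)) = ((-theta u y : ℝ) : ℂ) * Complex.I := by
    push_cast; ring
  rcases hz with h | h <;> subst h
  · constructor
    · rw [zplus, norm_mul, mul_comm Complex.I, Complex.norm_exp_ofReal_mul_I]
      simp [abs_of_nonneg hρ]
    · rw [zplus, mul_comm Complex.I]
      simp only [Complex.mul_re, Complex.ofReal_re, Complex.ofReal_im,
        Complex.exp_ofReal_mul_I_re, zero_mul, sub_zero]
      exact hcos
  · constructor
    · rw [zminus, norm_mul, hneg, Complex.norm_exp_ofReal_mul_I]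
      simp [abs_of_nonneg hρ]
    · rw [zminus, hneg]
      simp only [Complex.mul_re, Complex.ofReal_re, Complex.ofReal_im,
        Complex.exp_ofReal_mul_I_re, zero_mul, sub_zero, Real.cos_neg]
      exact hcos

/-- Lemma 1, input–output form: for the real Hilbert space
H = L²([0,∞), ℝᵖ) and a relation R ⊆ H × H with (0,y) ∈ R ⟹ y = 0, the quadratic
constraint π₁₁·‖y‖² + 2·π₁₂·⟪u,y⟫ + π₂₂·‖u‖² ≥ 0 holds for all (u,y) ∈ R iff
SG(R) ⊆ S(Pm). -/
theorem stmt_6 (p : ℕ) (hp : 1 ≤ p)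
    (R : Set ((Lp (EuclideanSpace ℝ (Fin p)) 2 (volume.restrict (Set.Ici (0:ℝ)))) ×
              (Lp (EuclideanSpace ℝ (Fin p)) 2 (volume.restrict (Set.Ici (0:ℝ))))))
    (hR : ∀ y, (0, y) ∈ R → y = 0)
    (Pm : Matrix (Fin 2) (Fin 2) ℝ) (hPm : Pm.IsSymm) :
    (∀ q ∈ R, 0 ≤ Pm 0 0 * ‖q.2‖ ^ 2 + 2 * Pm 0 1 * ⟪q.1, q.2⟫ + Pm 1 1 * ‖q.1‖ ^ 2)
      ↔ SG R ⊆ SRegion Pm := by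
  constructor
  · intro h z hz
    obtain ⟨q, hq, hu, hzq⟩ := hz
    obtain ⟨habs, hre⟩ := zdata q.1 q.2 hu z hzq
    have huN : ‖q.1‖ ≠ 0 := norm_ne_zero_iff.mpr hu
    have key : Pm 0 0 * ‖z‖ ^ 2 + 2 * Pm 0 1 * z.re + Pm 1 1 =
        (Pm 0 0 * ‖q.2‖ ^ 2 + 2 * Pm 0 1 * ⟪q.1, q.2⟫ + Pm 1 1 * ‖q.1‖ ^ 2) / ‖q.1‖ ^ 2 := by
      rw [habs, hre]
      field_simp
    show 0 ≤ Pm 0 0 * ‖z‖ ^ 2 + 2 * Pm 0 1 * z.re + Pm 1 1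
    rw [key]
    exact div_nonneg (h q hq) (sq_nonneg _)
  · intro h q hq
    by_cases hu : q.1 = 0
    · have hy : q.2 = 0 := hR q.2 (by rwa [← hu, Prod.mk.eta])
      simp [hu, hy]
    · have hz : zplus q.1 q.2 ∈ SG R := ⟨q, hq, hu, Or.inl rfl⟩
      have hS := h hz
      obtain ⟨habs, hre⟩ := zdata q.1 q.2 hu (zplus q.1 q.2) (Or.inl rfl)
      have huN : ‖q.1‖ ≠ 0 := norm_ne_zero_iff.mpr hu
      have hS' : 0 ≤ Pm 0 0 * ‖zplus q.1 q.2‖ ^ 2 +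
          2 * Pm 0 1 * (zplus q.1 q.2).re + Pm 1 1 := hS
      have key : Pm 0 0 * ‖q.2‖ ^ 2 + 2 * Pm 0 1 * ⟪q.1, q.2⟫ + Pm 1 1 * ‖q.1‖ ^ 2 =
          (Pm 0 0 * ‖zplus q.1 q.2‖ ^ 2 +
            2 * Pm 0 1 * (zplus q.1 q.2).re + Pm 1 1) * ‖q.1‖ ^ 2 := by
        rw [habs, hre]
        field_simp
      rw [key]
      exact mul_nonneg hS' (sq_nonneg _)
end

section
/- Let p ≥ 1, let H be the real Hilbert space L² of square-integrable functions from [0,∞) to ℝᵖ (Mathlib: MeasureTheory.Lp (EuclideanSpace ℝ (Fin p)) 2 with respect to Lebesgue measure restricted to [0,∞)), and let R ⊆ H × H be a relation. Let Π̃ be a set of real symmetric 2×2 matrices such that for every Π = [[π₁₁, π₁₂],[π₁₂, π₂₂]] ∈ Π̃ and every (u, y) ∈ R one has π₁₁·‖y‖² + 2·π₁₂·⟪u, y⟫ + π₂₂·‖u‖² ≥ 0. Then SG(R) ⊆ ⋂_{Π ∈ Π̃} S(Π). -/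
open RealInnerProductSpace MeasureTheory

/-- for the real Hilbert space H = L²([0,∞), ℝᵖ), a relation R ⊆ H × H,
and a set Π̃ of real symmetric 2×2 matrices each satisfying the quadratic constraint on
all of R, one has SG(R) ⊆ ⋂_{Π ∈ Π̃} S(Π). -/
theorem stmt_7 (p : ℕ) (hp : 1 ≤ p)
    (R : Set ((Lp (EuclideanSpace ℝ (Fin p)) 2 (volume.restrict (Set.Ici (0:ℝ)))) ×
              (Lp (EuclideanSpace ℝ (Fin p)) 2 (volume.restrict (Set.Ici (0:ℝ))))))
    (PiSet : Set (Matrix (Fin 2) (Fin 2) ℝ))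
    (hsymm : ∀ Pm ∈ PiSet, Pm.IsSymm)
    (hiqc : ∀ Pm ∈ PiSet, ∀ q ∈ R,
      0 ≤ Pm 0 0 * ‖q.2‖ ^ 2 + 2 * Pm 0 1 * ⟪q.1, q.2⟫ + Pm 1 1 * ‖q.1‖ ^ 2) :
    SG R ⊆ ⋂ Pm ∈ PiSet, SRegion Pm := by
  intro z hz
  simp only [Set.mem_iInter]
  intro Pm hPm
  obtain ⟨q, hqR, hq1, hzeq⟩ := hz
  have hiq := hiqc Pm hPm q hqR
  set u := q.1 with hu'
  set y := q.2 with hy'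
  have hu : (0:ℝ) < ‖u‖ := norm_pos_iff.mpr hq1
  have hcos : ‖y‖ * Real.cos (theta u y) = ⟪u, y⟫ / ‖u‖ := by
    unfold theta
    by_cases hy : y = 0
    · simp [hy, inner_zero_right]
    · rw [if_neg hy, Real.cos_arccos]
      · have hny : (0:ℝ) < ‖y‖ := norm_pos_iff.mpr hy
        field_simp
      · have := abs_real_inner_div_norm_mul_norm_le_one u y
        linarith [abs_le.mp this |>.1]
      · have := abs_real_inner_div_norm_mul_norm_le_one u y
        linarith [abs_le.mp this |>.2]
  have habs : ‖z‖ = ‖y‖ / ‖u‖ := by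
    rcases hzeq with h | h <;> rw [h] <;>
      simp [zplus, zminus, Complex.norm_exp, abs_of_nonneg,
        div_nonneg (norm_nonneg y) hu.le]
  have hre : z.re = ⟪u, y⟫ / ‖u‖ ^ 2 := by
    have h1 : (Complex.I * ((theta u y : ℝ) : ℂ)) = ((theta u y : ℝ) : ℂ) * Complex.I := mul_comm _ _
    have h2 : (-(Complex.I * ((theta u y : ℝ) : ℂ))) = ((-(theta u y) : ℝ) : ℂ) * Complex.I := by
      push_cast; ring
    rcases hzeq with h | h <;> rw [h]
    · rw [zplus, h1]
      simp [Complex.exp_ofReal_mul_I_re]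
      rw [div_mul_eq_mul_div, hcos]
      rw [div_div]
      ring_nf
    · have h3 : (Complex.exp (-(((theta u y : ℝ) : ℂ) * Complex.I))).re
          = Real.cos (theta u y) := by
        rw [← neg_mul, ← Complex.ofReal_neg, Complex.exp_ofReal_mul_I_re, Real.cos_neg]
      rw [zminus, h1]
      simp only [Complex.mul_re, Complex.ofReal_re, Complex.ofReal_im, zero_mul, sub_zero, h3]
      rw [div_mul_eq_mul_div, hcos, div_div]
      ring_nf
  show 0 ≤ Pm 0 0 * ‖z‖ ^ 2 + 2 * Pm 0 1 * z.re + Pm 1 1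
  rw [habs, hre]
  rw [div_pow]
  have h2 : (0:ℝ) < ‖u‖ ^ 2 := by positivity
  have := div_nonneg hiq h2.le
  calc (0:ℝ) ≤ (Pm 0 0 * ‖y‖ ^ 2 + 2 * Pm 0 1 * ⟪u, y⟫ + Pm 1 1 * ‖u‖ ^ 2) / ‖u‖ ^ 2 := this
    _ = Pm 0 0 * (‖y‖ ^ 2 / ‖u‖ ^ 2) + 2 * Pm 0 1 * (⟪u, y⟫ / ‖u‖ ^ 2) + Pm 1 1 := by
        field_simp
end

section
/- (Flow condition of Theorem 1, pointwise form) Let n, p ≥ 1, let A, P, E ∈ ℝⁿˣⁿ with P symmetric, B ∈ ℝⁿˣᵖ, C ∈ ℝᵖˣⁿ, D ∈ ℝᵖˣᵖ, let Π = [[π₁₁, π₁₂],[π₁₂, π₂₂]] be a real symmetric 2×2 matrix, and let U ∈ ℝⁿˣⁿ be symmetric with all entries nonnegative. Define the block matrix F = [[C, D],[0, I_p]] ∈ ℝ⁽²ᵖ⁾ˣ⁽ⁿ⁺ᵖ⁾ and Θ(Π) = Fᵀ·(Π ⊗ I_p)·F ∈ ℝ⁽ⁿ⁺ᵖ⁾ˣ⁽ⁿ⁺ᵖ⁾,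 where ⊗ is the Kronecker product. If the matrix [[AᵀP + PA, PB],[BᵀP, 0]] − Θ(Π) + [[EᵀUE, 0],[0, 0]] is negative semidefinite (its negation is positive semidefinite), then for every x ∈ ℝⁿ with every coordinate of E·x nonnegative and every u ∈ ℝᵖ, setting y = C·x + D·u, one has 2·xᵀ·P·(A·x + B·u) ≤ π₁₁·‖y‖² + 2·π₁₂·(yᵀ·u) + π₂₂·‖u‖², where ‖·‖ is the Euclidean norm and yᵀ·u the Euclidean inner product. -/
open Matrix

/-- The Kronecker product Π ⊗ I_p, reindexed so that Fin 2 × Fin p ≃ Fin p ⊕ Fin p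
(first block row corresponds to the index 0 of Fin 2). -/
noncomputable def kron2 (p : ℕ) (Pm : Matrix (Fin 2) (Fin 2) ℝ) :
    Matrix (Fin p ⊕ Fin p) (Fin p ⊕ Fin p) ℝ :=
  Matrix.reindex
    ((finTwoEquiv.prodCongr (Equiv.refl (Fin p))).trans (Equiv.boolProdEquivSum (Fin p)))
    ((finTwoEquiv.prodCongr (Equiv.refl (Fin p))).trans (Equiv.boolProdEquivSum (Fin p)))
    (Matrix.kroneckerMap (· * ·) Pm (1 : Matrix (Fin p) (Fin p) ℝ))

lemma kron2_eq (p : ℕ) (Pm : Matrix (Fin 2) (Fin 2) ℝ) :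
    kron2 p Pm = fromBlocks (Pm 0 0 • 1) (Pm 0 1 • 1) (Pm 1 0 • 1) (Pm 1 1 • 1) := by
  ext i j
  cases i <;> cases j <;>
    simp [kron2, Matrix.reindex_apply, Equiv.boolProdEquivSum, fromBlocks, Matrix.one_apply,
      smul_eq_mul, mul_ite, mul_zero, mul_one, finTwoEquiv]

lemma quad_fromBlocks {n p : ℕ} (A : Matrix (Fin n) (Fin n) ℝ) (B : Matrix (Fin n) (Fin p) ℝ)
    (C : Matrix (Fin p) (Fin n) ℝ) (D : Matrix (Fin p) (Fin p) ℝ)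
    (x : Fin n → ℝ) (u : Fin p → ℝ) :
    Sum.elim x u ⬝ᵥ (fromBlocks A B C D).mulVec (Sum.elim x u)
      = x ⬝ᵥ A.mulVec x + x ⬝ᵥ B.mulVec u + u ⬝ᵥ C.mulVec x + u ⬝ᵥ D.mulVec u := by
  rw [fromBlocks_mulVec]
  simp only [Sum.elim_comp_inl, Sum.elim_comp_inr]
  rw [sumElim_dotProduct_sumElim, dotProduct_add, dotProduct_add]
  ring


/-- Flow condition of Theorem 1, pointwise form: if the flow LMI
[[AᵀP + PA, PB],[BᵀP, 0]] − Θ(Π) + [[EᵀUE, 0],[0, 0]] ⪯ 0 holds, where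
Θ(Π) = Fᵀ(Π ⊗ I_p)F with F = [[C, D],[0, I_p]], then for every x with E·x entrywise
nonnegative and every u, with y = C·x + D·u, one has
2·xᵀP(Ax + Bu) ≤ π₁₁·‖y‖² + 2·π₁₂·(yᵀu) + π₂₂·‖u‖² (Euclidean norms/inner products,
written via dot products). -/
theorem stmt_9 (n p : ℕ) (hn : 1 ≤ n) (hp : 1 ≤ p)
    (A P E : Matrix (Fin n) (Fin n) ℝ) (B : Matrix (Fin n) (Fin p) ℝ)
    (C : Matrix (Fin p) (Fin n) ℝ) (D : Matrix (Fin p) (Fin p) ℝ)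
    (hP : P.IsSymm)
    (Pm : Matrix (Fin 2) (Fin 2) ℝ) (hPm : Pm.IsSymm)
    (U : Matrix (Fin n) (Fin n) ℝ) (hU : U.IsSymm) (hUpos : ∀ i j, 0 ≤ U i j)
    (h : (-(Matrix.fromBlocks (Aᵀ * P + P * A) (P * B) (Bᵀ * P) 0
          - (Matrix.fromBlocks C D 0 (1 : Matrix (Fin p) (Fin p) ℝ))ᵀ * kron2 p Pm *
              Matrix.fromBlocks C D 0 (1 : Matrix (Fin p) (Fin p) ℝ)
          + Matrix.fromBlocks (Eᵀ * U * E) 0 0 0)).PosSemidef) :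
    ∀ x : Fin n → ℝ, (∀ i, 0 ≤ E.mulVec x i) → ∀ u : Fin p → ℝ,
      2 * (x ⬝ᵥ P.mulVec (A.mulVec x + B.mulVec u)) ≤
        Pm 0 0 * ((C.mulVec x + D.mulVec u) ⬝ᵥ (C.mulVec x + D.mulVec u))
        + 2 * Pm 0 1 * ((C.mulVec x + D.mulVec u) ⬝ᵥ u)
        + Pm 1 1 * (u ⬝ᵥ u) := by
  intro x hx u
  set y := C.mulVec x + D.mulVec u with hy
  set z : Fin n ⊕ Fin p → ℝ := Sum.elim x u with hz
  set F := Matrix.fromBlocks C D 0 (1 : Matrix (Fin p) (Fin p) ℝ) with hF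
  set M := Matrix.fromBlocks (Aᵀ * P + P * A) (P * B) (Bᵀ * P) 0
          - Fᵀ * kron2 p Pm * F + Matrix.fromBlocks (Eᵀ * U * E) 0 0 0 with hM
  have hq : z ⬝ᵥ M.mulVec z ≤ 0 := by
    have := h.dotProduct_mulVec_nonneg z
    simpa [neg_mulVec, dotProduct_neg, star_trivial] using this
  -- expand
  have hsplit : z ⬝ᵥ M.mulVec z
      = z ⬝ᵥ (Matrix.fromBlocks (Aᵀ * P + P * A) (P * B) (Bᵀ * P) 0).mulVec z
        - z ⬝ᵥ (Fᵀ * kron2 p Pm * F).mulVec z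
        + z ⬝ᵥ (Matrix.fromBlocks (Eᵀ * U * E) 0 0 0).mulVec z := by
    rw [hM, add_mulVec, sub_mulVec, dotProduct_add, dotProduct_sub]
  -- term 1
  have hPsymm : ∀ (v : Fin n → ℝ) (w : Fin n → ℝ), v ⬝ᵥ P.mulVec w = P.mulVec v ⬝ᵥ w := by
    intro v w
    rw [dotProduct_mulVec, ← vecMul_transpose, hP.eq]
  have h1 : z ⬝ᵥ (Matrix.fromBlocks (Aᵀ * P + P * A) (P * B) (Bᵀ * P) 0).mulVec z
      = 2 * (x ⬝ᵥ P.mulVec (A.mulVec x + B.mulVec u)) := by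
    rw [hz, quad_fromBlocks]
    simp only [add_mulVec, dotProduct_add, ← mulVec_mulVec, zero_mulVec, dotProduct_zero,
      mulVec_add]
    rw [dotProduct_mulVec x Aᵀ, vecMul_transpose, dotProduct_mulVec u Bᵀ, vecMul_transpose,
      hPsymm x (A.mulVec x), hPsymm x (B.mulVec u), dotProduct_comm (A.mulVec x) (P.mulVec x)]
    rw [dotProduct_comm (B.mulVec u) (P.mulVec x)]
    ring
  -- term 2
  have hFz : F.mulVec z = Sum.elim y u := by
    rw [hF, hz, fromBlocks_mulVec]
    simp [hy]
  have h2 : z ⬝ᵥ (Fᵀ * kron2 p Pm * F).mulVec z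
      = Pm 0 0 * (y ⬝ᵥ y) + 2 * Pm 0 1 * (y ⬝ᵥ u) + Pm 1 1 * (u ⬝ᵥ u) := by
    rw [← mulVec_mulVec, ← mulVec_mulVec, dotProduct_mulVec z Fᵀ, vecMul_transpose, hFz,
      kron2_eq, quad_fromBlocks]
    have h10 : Pm 1 0 = Pm 0 1 := by
      have := hPm.apply 0 1
      simpa using this
    simp only [smul_mulVec, one_mulVec, dotProduct_smul, smul_eq_mul, h10,
      dotProduct_comm u y]
    ring
  -- term 3
  have h3 : 0 ≤ z ⬝ᵥ (Matrix.fromBlocks (Eᵀ * U * E) 0 0 0).mulVec z := by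
    rw [hz, quad_fromBlocks]
    simp only [zero_mulVec, dotProduct_zero, add_zero]
    rw [← mulVec_mulVec, ← mulVec_mulVec, dotProduct_mulVec x Eᵀ, vecMul_transpose]
    unfold dotProduct
    apply Finset.sum_nonneg
    intro i _
    apply mul_nonneg (hx i)
    unfold mulVec dotProduct
    apply Finset.sum_nonneg
    intro j _
    exact mul_nonneg (hUpos i j) (hx j)
  rw [hsplit, h1, h2] at hq
  linarith
end

section
/- (First jump condition of Theorem 1, pointwise form) Let n ≥ 1, let R, P, E ∈ ℝⁿˣⁿ with P symmetric, and let U ∈ ℝⁿˣⁿ be symmetric with all entries nonnegative. If −(Rᵀ·P·R − P + Eᵀ·U·E) is positive semidefinite, then for every x ∈ ℝⁿ such that every coordinate of E·x is nonnegative, one has (R·x)ᵀ·P·(R·x) ≤ xᵀ·P·x. -/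
open Matrix

/-- First jump condition of Theorem 1, pointwise form: Let R, P, E ∈ ℝⁿˣⁿ
with P symmetric, and U symmetric with nonnegative entries. If −(RᵀPR − P + EᵀUE) is
positive semidefinite, then for every x with E·x entrywise nonnegative,
(Rx)ᵀP(Rx) ≤ xᵀPx. -/
theorem stmt_10 (n : ℕ) (hn : 1 ≤ n) (R P E : Matrix (Fin n) (Fin n) ℝ)
    (hP : P.IsSymm) (U : Matrix (Fin n) (Fin n) ℝ) (hU : U.IsSymm)
    (hUpos : ∀ i j, 0 ≤ U i j)
    (h : (-(Rᵀ * P * R - P + Eᵀ * U * E)).PosSemidef) :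
    ∀ x : Fin n → ℝ, (∀ i, 0 ≤ E.mulVec x i) →
      R.mulVec x ⬝ᵥ P.mulVec (R.mulVec x) ≤ x ⬝ᵥ P.mulVec x := by
  intro x hx
  have h1 := h.dotProduct_mulVec_nonneg x
  simp only [star_trivial] at h1
  have hU0 : 0 ≤ E.mulVec x ⬝ᵥ U.mulVec (E.mulVec x) := by
    apply Finset.sum_nonneg
    intro i _
    refine mul_nonneg (hx i) ?_
    simp only [mulVec, dotProduct]
    exact Finset.sum_nonneg fun j _ => mul_nonneg (hUpos i j) (hx j)
  have expand : x ⬝ᵥ (-(Rᵀ * P * R - P + Eᵀ * U * E)).mulVec x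
      = x ⬝ᵥ P.mulVec x - R.mulVec x ⬝ᵥ P.mulVec (R.mulVec x)
        - E.mulVec x ⬝ᵥ U.mulVec (E.mulVec x) := by
    simp only [neg_mulVec, sub_mulVec, add_mulVec, dotProduct_neg, dotProduct_sub,
      dotProduct_add, ← mulVec_mulVec]
    have hR : x ⬝ᵥ Rᵀ.mulVec (P.mulVec (R.mulVec x))
        = R.mulVec x ⬝ᵥ P.mulVec (R.mulVec x) := by
      rw [dotProduct_mulVec, vecMul_transpose]
    have hE : x ⬝ᵥ Eᵀ.mulVec (U.mulVec (E.mulVec x))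
        = E.mulVec x ⬝ᵥ U.mulVec (E.mulVec x) := by
      rw [dotProduct_mulVec, vecMul_transpose]
    rw [hR, hE]; ring
  rw [expand] at h1
  linarith
end

section
/- (Second jump condition of Theorem 1, pointwise form) Let n ≥ 1, let R, P_i, P_j, E_i, E_j ∈ ℝⁿˣⁿ with P_i, P_j symmetric, and let U₂, U₄ ∈ ℝⁿˣⁿ be symmetric with all entries nonnegative. If −(Rᵀ·P_i·R − P_j + E_jᵀ·U₄·E_j + Rᵀ·E_iᵀ·U₂·E_i·R) is positive semidefinite, then for every x ∈ ℝⁿ such that every coordinate of E_j·x is nonnegative and every coordinate of E_i·(R·x) is nonnegative, one has (R·x)ᵀ·P_i·(R·x) ≤ xᵀ·P_j·x. -/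
open Matrix

lemma quad_form_eq {n : ℕ} (A U : Matrix (Fin n) (Fin n) ℝ) (x : Fin n → ℝ) :
    x ⬝ᵥ (Aᵀ * U * A).mulVec x = (A.mulVec x) ⬝ᵥ U.mulVec (A.mulVec x) := by
  rw [← mulVec_mulVec, ← mulVec_mulVec, dotProduct_mulVec, vecMul_transpose]

lemma quad_form_nonneg {n : ℕ} (U : Matrix (Fin n) (Fin n) ℝ)
    (hU : ∀ i j, 0 ≤ U i j) (v : Fin n → ℝ) (hv : ∀ i, 0 ≤ v i) :
    0 ≤ v ⬝ᵥ U.mulVec v := by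
  apply Finset.sum_nonneg
  intro i _
  refine mul_nonneg (hv i) ?_
  rw [mulVec, dotProduct]
  exact Finset.sum_nonneg fun j _ => mul_nonneg (hU i j) (hv j)

/-- Second jump condition of Theorem 1, pointwise form: Let
R, P_i, P_j, E_i, E_j ∈ ℝⁿˣⁿ with P_i, P_j symmetric, and U₂, U₄ symmetric with
nonnegative entries. If −(RᵀP_iR − P_j + E_jᵀU₄E_j + RᵀE_iᵀU₂E_iR) is positive
semidefinite, then for every x with E_j·x and E_i·(R·x) entrywise nonnegative,
(Rx)ᵀP_i(Rx) ≤ xᵀP_jx. -/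
theorem stmt_11 (n : ℕ) (hn : 1 ≤ n) (R Pi Pj Ei Ej : Matrix (Fin n) (Fin n) ℝ)
    (hPi : Pi.IsSymm) (hPj : Pj.IsSymm)
    (U₂ U₄ : Matrix (Fin n) (Fin n) ℝ) (hU₂ : U₂.IsSymm) (hU₄ : U₄.IsSymm)
    (hU₂pos : ∀ i j, 0 ≤ U₂ i j) (hU₄pos : ∀ i j, 0 ≤ U₄ i j)
    (h : (-(Rᵀ * Pi * R - Pj + Ejᵀ * U₄ * Ej + Rᵀ * Eiᵀ * U₂ * Ei * R)).PosSemidef) :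
    ∀ x : Fin n → ℝ, (∀ i, 0 ≤ Ej.mulVec x i) → (∀ i, 0 ≤ Ei.mulVec (R.mulVec x) i) →
      R.mulVec x ⬝ᵥ Pi.mulVec (R.mulVec x) ≤ x ⬝ᵥ Pj.mulVec x := by
  intro x hEj hEi
  have key := h.dotProduct_mulVec_nonneg x
  simp only [star_trivial] at key
  have hkey := key
  rw [neg_mulVec, dotProduct_neg] at hkey
  have hexp : x ⬝ᵥ (Rᵀ * Pi * R - Pj + Ejᵀ * U₄ * Ej + Rᵀ * Eiᵀ * U₂ * Ei * R).mulVec x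
      = x ⬝ᵥ (Rᵀ * Pi * R).mulVec x - x ⬝ᵥ Pj.mulVec x
        + x ⬝ᵥ (Ejᵀ * U₄ * Ej).mulVec x + x ⬝ᵥ (Rᵀ * Eiᵀ * U₂ * Ei * R).mulVec x := by
    simp [add_mulVec, sub_mulVec, dotProduct_add, dotProduct_sub]
  have h1 : x ⬝ᵥ (Rᵀ * Pi * R).mulVec x = R.mulVec x ⬝ᵥ Pi.mulVec (R.mulVec x) :=
    quad_form_eq R Pi x
  have h2 : x ⬝ᵥ (Ejᵀ * U₄ * Ej).mulVec x = Ej.mulVec x ⬝ᵥ U₄.mulVec (Ej.mulVec x) :=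
    quad_form_eq Ej U₄ x
  have h3 : x ⬝ᵥ (Rᵀ * Eiᵀ * U₂ * Ei * R).mulVec x
      = Ei.mulVec (R.mulVec x) ⬝ᵥ U₂.mulVec (Ei.mulVec (R.mulVec x)) := by
    have : Rᵀ * Eiᵀ * U₂ * Ei * R = (Ei * R)ᵀ * U₂ * (Ei * R) := by
      rw [transpose_mul]; simp [mul_assoc]
    rw [this, quad_form_eq, ← mulVec_mulVec]
  have hq2 := quad_form_nonneg U₄ hU₄pos _ hEj
  have hq3 := quad_form_nonneg U₂ hU₂pos _ hEi
  rw [hexp, h1, h2, h3] at hkey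
  linarith
end
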